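/- Let R be a commutative ring and let M be the N×N block matrix over R[ε] with identity blocks I_{n_1},...,I_{n_m} along the block diagonal, variable-matrix blocks X^{(1)},...,X^{(m)} on the block superdiagonal (where X^{(i)} is n_i × n_{i+1} and n_1 = n_{m+1}), the block ε·I_{n_1} in the bottom-left corner, and zeros elsewhere (N = n_1 + ... + n_m). Then det(M) ≡ 1 + (−1)^{m+1} ε · tr(X^{(1)} X^{(2)} ⋯ X^{(m)}) modulo ε². -/

import Mathlib

/-!
Write the matrix as `(1 + U) + ε W`, where `U` holds the superdiagonal blocks `X⁽¹⁾, …, X⁽ᵐ⁻¹⁾`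
and `W` the corner block `X⁽ᵐ⁾`. Grading an index by its block, `U` raises the grade by one and
`W` lowers it by `m - 1`. Hence `1 + U` is block unitriangular, with determinant one and inverse
`∑ (-U)ᵗ`, and `det (1 + U + ε W) = det (1 + ε (1 + U)⁻¹ W) ≡ 1 + ε tr ((1 + U)⁻¹ W)` mod `ε²`.
Among the terms `(-U)ᵗ W` only `t = m - 1` has grade zero, so only it can have a nonzero trace,
and the trace of `U ^ (m - 1) W` is the sum over closed walks visiting the blocks in order,
which is `tr (X⁽¹⁾ ⋯ X⁽ᵐ⁾)`.
-/

open Polynomial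

theorem Fintype.sum_eq_sum_sections {ι M : Type*} [Fintype ι] [DecidableEq ι]
    {κ : ι → Type*} [∀ i, Fintype (κ i)] [AddCommMonoid M] (F : (ι → Σ i, κ i) → M)
    (hF : ∀ v, F v ≠ 0 → ∀ i, (v i).1 = i) :
    ∑ v, F v = ∑ f : (i : ι) → κ i, F fun i => ⟨i, f i⟩ := by
  classical
  rw [← Finset.sum_filter_of_ne fun v _ => hF v,
    Finset.sum_subtype _ (p := fun v => ∀ i, (v i).1 = i) fun _ => by simp,
    ← (Equiv.piEquivSubtypeSigma ι κ).sum_comp]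
  rfl

namespace Matrix

section Walks

variable {ι S : Type*} [Fintype ι] [DecidableEq ι] [CommSemiring S]

theorem pow_mul_apply_eq_sum (A B : Matrix ι ι S) (k : ℕ) (p q : ι) :
    (A ^ k * B) p q = ∑ v : Fin (k + 1) → ι,
      if v 0 = p then (∏ i : Fin k, A (v i.castSucc) (v i.succ)) * B (v (Fin.last k)) q
      else 0 := by
  induction k generalizing p with
  | zero =>
    rw [← (Equiv.funUnique (Fin 1) ι).symm.sum_comp]
    simp
  | succ k ih =>
    rw [pow_succ', mul_assoc, mul_apply, ← (Fin.consEquiv fun _ => ι).sum_comp,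
      Fintype.sum_prod_type]
    simp only [ih, Finset.mul_sum, Fin.consEquiv_apply, Fin.cons_zero, Fin.prod_univ_succ,
      Fin.castSucc_zero, Fin.cons_succ, ← Fin.succ_castSucc, ← Fin.succ_last, mul_ite, mul_zero,
      mul_assoc, Finset.sum_comm (γ := ι), Finset.sum_ite_eq, Finset.sum_ite_eq', Finset.mem_univ,
      ↓reduceIte, Finset.sum_ite_irrel, Finset.sum_const_zero]

theorem trace_pow_mul_eq_sum (A B : Matrix ι ι S) (k : ℕ) :
    trace (A ^ k * B) = ∑ v : Fin (k + 1) → ι,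
      (∏ i : Fin k, A (v i.castSucc) (v i.succ)) * B (v (Fin.last k)) (v 0) := by
  simp only [trace, diag_apply, pow_mul_apply_eq_sum]
  rw [Finset.sum_comm]
  simp only [Finset.sum_ite_eq, Finset.mem_univ, ↓reduceIte]

end Walks

theorem X_sq_dvd_det_map_add_X_smul_sub {ι R : Type*} [Fintype ι] [DecidableEq ι]
    [CommRing R] (A B : Matrix ι ι R) (hA : IsUnit A.det) :
    (X : R[X]) ^ 2 ∣
      det (A.map C + (X : R[X]) • B.map C) - C A.det * (1 + X * C (trace (A⁻¹ * B))) := by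
  have hfactor :
      A.map C + (X : R[X]) • B.map C = A.map C * (1 + (X : R[X]) • (A⁻¹ * B).map C) := by
    rw [mul_add, mul_one, mul_smul_comm, ← Matrix.map_mul, mul_nonsing_inv_cancel_left _ _ hA]
  rw [hfactor, det_mul, det_one_add_X_smul, ← RingHom.mapMatrix_apply, ← RingHom.map_det,
    smul_eq_C_mul]
  exact ⟨C A.det * (det (1 + (X : R[X]) • (A⁻¹ * B).map C)).divX.divX, by ring⟩

variable {ι R : Type*}

def IsHomogeneous [Zero R] (b : ι → ℕ) (d : ℤ) (A : Matrix ι ι R) : Prop :=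
  ∀ p q, A p q ≠ 0 → (b q : ℤ) = b p + d

namespace IsHomogeneous

variable {b : ι → ℕ} {d e : ℤ}

section Semiring

variable [Semiring R] {A B : Matrix ι ι R}

theorem one [DecidableEq ι] : IsHomogeneous b 0 (1 : Matrix ι ι R) := fun p q h => by
  rw [not_imp_comm.mp one_apply_ne h, add_zero]

variable [Fintype ι]

theorem mul (hA : IsHomogeneous b d A) (hB : IsHomogeneous b e B) :
    IsHomogeneous b (d + e) (A * B) := fun p q h => by
  obtain ⟨r, -, hr⟩ := Finset.exists_ne_zero_of_sum_ne_zero h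
  rw [hB r q (right_ne_zero_of_mul hr), hA p r (left_ne_zero_of_mul hr), add_assoc]

theorem trace_eq_zero (hA : IsHomogeneous b d A) (hd : d ≠ 0) : trace A = 0 :=
  Finset.sum_eq_zero fun p _ => by_contra fun h => hd (by linarith [hA p p h])

variable [DecidableEq ι]

theorem pow (hA : IsHomogeneous b d A) (t : ℕ) : IsHomogeneous b (t * d) (A ^ t) := by
  induction t with
  | zero => simpa using one
  | succ t ih => simpa [pow_succ, add_mul] using ih.mul hA

theorem pow_eq_zero (hA : IsHomogeneous b 1 A) {N : ℕ} (hb : ∀ p, b p < N) : A ^ N = 0 := by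
  ext p q
  by_contra h
  linarith [(hA.pow N) p q h, hb q]

end Semiring

theorem grade_eq_of_walk_ne_zero [CommSemiring R] {A B : Matrix ι ι R} {k : ℕ}
    (hA : IsHomogeneous b 1 A) (hb : ∀ p, b p ≤ k) (hB : IsHomogeneous b (-k) B)
    {v : Fin (k + 1) → ι}
    (hv : (∏ i : Fin k, A (v i.castSucc) (v i.succ)) * B (v (Fin.last k)) (v 0) ≠ 0)
    (i : Fin (k + 1)) : b (v i) = i := by
  have hclose := hB _ _ (right_ne_zero_of_mul hv)
  have hstep (j : Fin k) : (b (v j.succ) : ℤ) = b (v j.castSucc) + 1 :=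
    hA _ _ fun h => left_ne_zero_of_mul hv (Finset.prod_eq_zero (Finset.mem_univ j) h)
  induction i using Fin.induction with
  | zero => have := hb (v (Fin.last k)); rw [Fin.val_zero]; omega
  | succ j ih => have := hstep j; simp only [Fin.val_succ, Fin.val_castSucc] at ih ⊢; omega

section CommRing

variable [CommRing R] [Fintype ι] [DecidableEq ι] {A B : Matrix ι ι R}

theorem det_one_add (hA : IsHomogeneous b 1 A) : det (1 + A) = 1 := by
  have hblock : ∀ p q, b p = b q → A p q = 0 := fun p q hpq =>
    by_contra fun h => by linarith [hA p q h, congrArg ((↑) : ℕ → ℤ) hpq]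
  have htri : BlockTriangular (1 + A) b := fun p q hlt => by
    rw [add_apply, one_apply_ne (by rintro rfl; exact lt_irrefl _ hlt), zero_add]
    exact by_contra fun h => by linarith [hA p q h, (Nat.cast_lt (α := ℤ)).mpr hlt]
  rw [htri.det]
  refine Finset.prod_eq_one fun a _ => ?_
  suffices (1 + A).toSquareBlock b a = 1 by rw [this, det_one]
  ext p q
  simp only [toSquareBlock_def, of_apply, add_apply, hblock _ _ (p.2.trans q.2.symm), add_zero,
    one_apply, Subtype.ext_iff]

theorem inv_one_add (hA : IsHomogeneous b 1 A) {N : ℕ} (hb : ∀ p, b p < N) :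
    (1 + A)⁻¹ = ∑ t ∈ Finset.range N, (-A) ^ t := by
  refine inv_eq_left_inv ?_
  rw [← sub_neg_eq_add, geom_sum_mul_neg, neg_pow, hA.pow_eq_zero hb, mul_zero, sub_zero]

theorem trace_inv_one_add_mul (hA : IsHomogeneous b 1 A) {k : ℕ} (hb : ∀ p, b p ≤ k)
    (hB : IsHomogeneous b (-k) B) : trace ((1 + A)⁻¹ * B) = (-1) ^ k * trace (A ^ k * B) := by
  have hterm (t : ℕ) : trace ((-A) ^ t * B) = (-1) ^ t * trace (A ^ t * B) := by
    rw [← neg_one_smul R A, _root_.smul_pow, smul_mul_assoc, trace_smul, smul_eq_mul]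
  rw [hA.inv_one_add (N := k + 1) fun p => Nat.lt_succ_of_le (hb p), Finset.sum_mul,
    trace_sum, Finset.sum_eq_single k (fun t _ htk => ?_) (by simp), hterm]
  rw [hterm, ((hA.pow t).mul hB).trace_eq_zero (by omega), mul_zero]

end CommRing

end IsHomogeneous

end Matrix

namespace CyclicBlock

variable {R : Type*} [CommRing R] {k : ℕ} {n : Fin (k + 1) → ℕ}
  (X : (i : Fin (k + 1)) → Matrix (Fin (n i)) (Fin (n (i + 1))) R)

def shift : Matrix ((i : Fin (k + 1)) × Fin (n i)) ((i : Fin (k + 1)) × Fin (n i)) R :=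
  Matrix.of fun p q => if h : q.1 = p.1 + 1 then X p.1 p.2 (Fin.cast (congrArg n h) q.2) else 0

def superdiag : Matrix ((i : Fin (k + 1)) × Fin (n i)) ((i : Fin (k + 1)) × Fin (n i)) R :=
  Matrix.of fun p q => if p.1 = Fin.last k then 0 else shift X p q

def corner : Matrix ((i : Fin (k + 1)) × Fin (n i)) ((i : Fin (k + 1)) × Fin (n i)) R :=
  Matrix.of fun p q => if p.1 = Fin.last k then shift X p q else 0

theorem shift_apply_sigma (f : (i : Fin (k + 1)) → Fin (n i)) {i j : Fin (k + 1)}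
    (h : j = i + 1) : shift X ⟨i, f i⟩ ⟨j, f j⟩ = X i (f i) (f (i + 1)) := by
  subst h
  simp [shift]

theorem fst_eq_of_shift_ne_zero {p q} (h : shift X p q ≠ 0) : q.1 = p.1 + 1 := by
  by_contra hq
  exact h (dif_neg hq)

theorem isHomogeneous_superdiag : (superdiag X).IsHomogeneous (fun p => p.1) 1 := fun p q h => by
  have hp : p.1 ≠ Fin.last k := fun hp => h (if_pos hp)
  have hq := fst_eq_of_shift_ne_zero X (by simpa [superdiag, hp] using h)
  simp [hq, Fin.val_add_one_of_lt (Fin.lt_last_iff_ne_last.mpr hp)]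

theorem isHomogeneous_corner : (corner X).IsHomogeneous (fun p => p.1) (-k) := fun p q h => by
  have hp : p.1 = Fin.last k := by_contra fun hp => h (if_neg hp)
  have hq := fst_eq_of_shift_ne_zero X (by simpa [corner, hp] using h)
  simp [hq, hp]

theorem trace_superdiag_pow_mul_corner :
    (superdiag X ^ k * corner X).trace =
      ∑ f : (i : Fin (k + 1)) → Fin (n i), ∏ i, X i (f i) (f (i + 1)) := by
  rw [Matrix.trace_pow_mul_eq_sum, Fintype.sum_eq_sum_sections _ fun v hv i =>
    Fin.ext ((isHomogeneous_superdiag X).grade_eq_of_walk_ne_zero (fun p => Fin.is_le p.1)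
      (isHomogeneous_corner X) hv i)]
  refine Finset.sum_congr rfl fun f _ => ?_
  rw [Fin.prod_univ_castSucc]
  congr 1
  · refine Finset.prod_congr rfl fun j _ => ?_
    simp only [superdiag, Matrix.of_apply, (Fin.castSucc_lt_last j).ne, if_false]
    exact shift_apply_sigma X f Fin.coeSucc_eq_succ.symm
  · simp only [corner, Matrix.of_apply, if_true]
    exact shift_apply_sigma X f (Fin.last_add_one k).symm

theorem of_eq_map_add_X_smul_map :
    Matrix.of (fun p q : (i : Fin (k + 1)) × Fin (n i) =>
      (if p = q then (1 : R[X]) else 0) +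
      (if h : q.1 = p.1 + 1 then
        (if (p.1 : ℕ) = k then (Polynomial.X : R[X]) else 1) *
          C (X p.1 p.2 (Fin.cast (congrArg n h) q.2))
      else 0)) = (1 + superdiag X).map C + (Polynomial.X : R[X]) • (corner X).map C := by
  ext p q : 1
  have hlast : (p.1 : ℕ) = k ↔ p.1 = Fin.last k := by simp [Fin.ext_iff]
  simp only [Matrix.of_apply, Matrix.add_apply, Matrix.map_apply, Matrix.smul_apply, hlast,
    superdiag, corner, shift, Matrix.one_apply]
  by_cases hp : p.1 = Fin.last k <;> simp [hp, apply_dite C]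

end CyclicBlock

open CyclicBlock in
/-- Let M be the N×N block matrix (N = n₁ + ... + n_m) over R[ε] with
identity blocks I_{n₁},...,I_{n_m} on the block diagonal, the block X⁽ⁱ⁾ (of size
nᵢ × n_{i+1}, indices cyclic so that n_{m+1} = n₁) in block position (i, i+1) for
i < m, the block ε·X⁽ᵐ⁾ in the bottom-left corner (block position (m,1), carrying the
factor ε of the cyclic wrap-around), and zeros elsewhere.  Then
det(M) ≡ 1 + (−1)^{m+1} ε · tr(X⁽¹⁾X⁽²⁾⋯X⁽ᵐ⁾)  (mod ε²),
where tr(X⁽¹⁾⋯X⁽ᵐ⁾) = Σ_{j₁,...,j_m} X⁽¹⁾_{j₁j₂} X⁽²⁾_{j₂j₃} ⋯ X⁽ᵐ⁾_{j_m j₁}. -/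
theorem det_block_cyclic_mod_eps_sq (R : Type*) [CommRing R] (m : ℕ) [NeZero m]
    (n : Fin m → ℕ) (X : (i : Fin m) → Matrix (Fin (n i)) (Fin (n (i + 1))) R) :
    (Polynomial.X : R[X]) ^ 2 ∣
      (Matrix.det (Matrix.of fun p q : (i : Fin m) × Fin (n i) =>
          (if p = q then (1 : R[X]) else 0) +
          (if h : q.1 = p.1 + 1 then
            (if (p.1 : ℕ) = m - 1 then (Polynomial.X : R[X]) else 1) *
              Polynomial.C (X p.1 p.2 (Fin.cast (congrArg n h) q.2))
          else 0))
        - (1 + (-1) ^ (m + 1) * Polynomial.X *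
            Polynomial.C (∑ f : (i : Fin m) → Fin (n i), ∏ i : Fin m, X i (f i) (f (i + 1))))) := by
  obtain ⟨k, rfl⟩ := Nat.exists_eq_add_one_of_ne_zero (NeZero.ne m)
  rw [Nat.add_sub_cancel, of_eq_map_add_X_smul_map]
  have hU := isHomogeneous_superdiag X
  have hdet := hU.det_one_add
  have key := Matrix.X_sq_dvd_det_map_add_X_smul_sub _ (corner X) (hdet ▸ isUnit_one)
  rw [hdet, hU.trace_inv_one_add_mul (fun p => Fin.is_le p.1) (isHomogeneous_corner X),
    trace_superdiag_pow_mul_corner] at key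
  convert key using 2
  simp only [map_one, map_mul, map_pow, map_neg]
  ring
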